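/- arXiv:1004.4264 — 5 statements merged into one kernel-verified Lean document; each statement's English description precedes it below -/
import Mathlib

section
/- Let Z be a nonempty finite type and P : Z → Z → ℝ a row-stochastic matrix that is irreducible. Then there exist a natural number t ≥ 1 and a real q > 0 such that for all states u, w ∈ Z, the sum of Prob(x) over all paths x of length t with x₀ = u and x_i ≠ w for all 0 ≤ i ≤ t is at most 1 − q. -/
open scoped Classical

/-- Probability of a path `x = (x₀, …, x_m)` of length `m`:
`Prob(x) = ∏_{i=1}^m P(x_{i-1}, x_i)`. -/
def pathProb {Z : Type*} (P : Z → Z → ℝ) {m : ℕ} (x : Fin (m + 1) → Z) : ℝ :=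
  ∏ i : Fin m, P (x i.castSucc) (x i.succ)

/-- `P` is a row-stochastic matrix. -/
def RowStochastic {Z : Type*} [Fintype Z] (P : Z → Z → ℝ) : Prop :=
  (∀ a b, 0 ≤ P a b) ∧ ∀ a, ∑ b, P a b = 1

/-- The chain is irreducible: for all `a b` there is `m ≥ 1` with `(P^m)(a,b) > 0`. -/
def IsIrreducibleChain {Z : Type*} [Fintype Z] [DecidableEq Z] (P : Z → Z → ℝ) : Prop :=
  ∀ a b : Z, ∃ m : ℕ, 1 ≤ m ∧ 0 < (Matrix.of P ^ m) a b

noncomputable def avoidSum {Z : Type*} [Fintype Z] [DecidableEq Z]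
    (P : Z → Z → ℝ) (w : Z) : ℕ → Z → ℝ
  | 0, u => if u = w then 0 else 1
  | (m + 1), u => if u = w then 0 else ∑ v, P u v * avoidSum P w m v

lemma pathProb_cons {Z : Type*} (P : Z → Z → ℝ) {m : ℕ} (a : Z) (y : Fin (m + 1) → Z) :
    pathProb P (Fin.cons a y) = P a (y 0) * pathProb P y := by
  unfold pathProb
  rw [Fin.prod_univ_succ]
  have h1 : (Fin.cons a y : Fin (m + 2) → Z) ((0 : Fin (m + 1)).succ) = y 0 := Fin.cons_succ _ _ _
  simp only [Fin.castSucc_zero, Fin.cons_zero, h1]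
  congr 1

lemma avoidSum_eq {Z : Type*} [Fintype Z] [DecidableEq Z] (P : Z → Z → ℝ) (w : Z) :
    ∀ (m : ℕ) (u : Z),
      (∑ x ∈ Finset.univ.filter (fun x : Fin (m + 1) → Z => x 0 = u ∧ ∀ i, x i ≠ w),
        pathProb P x) = avoidSum P w m u := by
  intro m
  induction m with
  | zero =>
    intro u
    rw [Finset.sum_filter]
    rw [← ((Equiv.funUnique (Fin 1) Z).symm.sum_comp
        (fun x : Fin 1 → Z => if x 0 = u ∧ ∀ i, x i ≠ w then pathProb P x else 0))]
    simp only [Equiv.funUnique_symm_apply]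
    by_cases h : u = w
    · subst h
      simp [avoidSum, pathProb]
    · rw [Finset.sum_eq_single u]
      · simp [avoidSum, pathProb, h, Ne.symm h]
      · intro b _ hb
        simp [hb]
      · simp
  | succ m ih =>
    intro u
    rw [Finset.sum_filter]
    have hcond : ∀ (a : Z) (y : Fin (m + 1) → Z),
        (((Fin.cons a y : Fin (m + 2) → Z) 0 = u ∧
            ∀ i, (Fin.cons a y : Fin (m + 2) → Z) i ≠ w) ↔
          (a = u ∧ a ≠ w ∧ ∀ j, y j ≠ w)) := by
      intro a y
      rw [Fin.forall_fin_succ]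
      simp [Fin.cons_zero, Fin.cons_succ, and_assoc]
    have key : (∑ x : Fin (m + 2) → Z,
          if x 0 = u ∧ ∀ i, x i ≠ w then pathProb P x else 0)
        = ∑ a : Z, ∑ y : Fin (m + 1) → Z,
            if a = u ∧ a ≠ w ∧ ∀ j, y j ≠ w then P a (y 0) * pathProb P y else 0 := by
      rw [← ((Fin.consEquiv (fun _ : Fin (m + 2) => Z)).sum_comp
          (fun x : Fin (m + 2) → Z => if x 0 = u ∧ ∀ i, x i ≠ w then pathProb P x else 0))]
      rw [Fintype.sum_prod_type]
      apply Finset.sum_congr rfl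
      intro a _
      apply Finset.sum_congr rfl
      intro y _
      show (if (Fin.cons a y : Fin (m + 2) → Z) 0 = u ∧
            ∀ i, (Fin.cons a y : Fin (m + 2) → Z) i ≠ w then pathProb P (Fin.cons a y) else 0)
          = _
      exact if_congr (hcond a y) (pathProb_cons P a y) rfl
    rw [key]
    by_cases h : u = w
    · subst h
      rw [avoidSum]
      simp only [if_pos rfl]
      apply Finset.sum_eq_zero
      intro a _
      apply Finset.sum_eq_zero
      intro y _
      rw [if_neg]
      rintro ⟨rfl, h2, -⟩
      exact h2 rfl
    · rw [Finset.sum_eq_single u]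
      · rw [avoidSum, if_neg h]
        have step1 : ∀ y : Fin (m + 1) → Z,
            (if u = u ∧ u ≠ w ∧ ∀ j, y j ≠ w then P u (y 0) * pathProb P y else 0)
            = (if ∀ j, y j ≠ w then P u (y 0) * pathProb P y else 0) := by
          intro y
          exact if_congr (by simp [h]) rfl rfl
        rw [Finset.sum_congr rfl (fun y _ => step1 y)]
        have hv : ∀ v : Z, P u v * avoidSum P w m v
            = ∑ y : Fin (m + 1) → Z,
                if y 0 = v ∧ ∀ i, y i ≠ w then P u (y 0) * pathProb P y else 0 := by
          intro v
          rw [← ih v, Finset.mul_sum, Finset.sum_filter]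
          apply Finset.sum_congr rfl
          intro y _
          by_cases hy : y 0 = v ∧ ∀ i, y i ≠ w
          · rw [if_pos hy, if_pos hy, hy.1]
          · rw [if_neg hy, if_neg hy]
        rw [show (∑ v : Z, P u v * avoidSum P w m v)
            = ∑ v : Z, ∑ y : Fin (m + 1) → Z,
                if y 0 = v ∧ ∀ i, y i ≠ w then P u (y 0) * pathProb P y else 0
          from Finset.sum_congr rfl (fun v _ => hv v)]
        rw [← Finset.sum_fiberwise Finset.univ (fun y : Fin (m + 1) → Z => y 0)
            (fun y => if ∀ j, y j ≠ w then P u (y 0) * pathProb P y else 0)]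
        apply Finset.sum_congr rfl
        intro v _
        rw [Finset.sum_filter]
        apply Finset.sum_congr rfl
        intro y _
        by_cases hy0 : y 0 = v
        · subst hy0
          simp only [if_pos rfl]
          by_cases hav : ∀ j, y j ≠ w <;> simp [hav]
        · simp [hy0]
      · intro a _ ha
        apply Finset.sum_eq_zero
        intro y _
        rw [if_neg]
        rintro ⟨rfl, -⟩
        exact ha rfl
      · simp

lemma pow_entry_nonneg {Z : Type*} [Fintype Z] [DecidableEq Z] {P : Z → Z → ℝ}
    (hP : RowStochastic P) : ∀ (m : ℕ) (a b : Z), 0 ≤ (Matrix.of P ^ m) a b := by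
  intro m
  induction m with
  | zero =>
    intro a b
    rw [pow_zero]
    rw [Matrix.one_apply]
    split <;> norm_num
  | succ m ih =>
    intro a b
    rw [pow_succ, Matrix.mul_apply]
    exact Finset.sum_nonneg fun v _ => mul_nonneg (ih a v) (hP.1 v b)

lemma pow_row_sum {Z : Type*} [Fintype Z] [DecidableEq Z] {P : Z → Z → ℝ}
    (hP : RowStochastic P) : ∀ (m : ℕ) (a : Z), ∑ b, (Matrix.of P ^ m) a b = 1 := by
  intro m
  induction m with
  | zero =>
    intro a
    simp [Matrix.one_apply]
  | succ m ih =>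
    intro a
    have : ∀ b, (Matrix.of P ^ (m + 1)) a b = ∑ v, (Matrix.of P ^ m) a v * P v b := by
      intro b
      rw [pow_succ, Matrix.mul_apply]
      rfl
    rw [Finset.sum_congr rfl fun b _ => this b, Finset.sum_comm]
    calc ∑ v, ∑ b, (Matrix.of P ^ m) a v * P v b
        = ∑ v, (Matrix.of P ^ m) a v * ∑ b, P v b := by
          apply Finset.sum_congr rfl; intro v _; rw [Finset.mul_sum]
      _ = ∑ v, (Matrix.of P ^ m) a v := by
          apply Finset.sum_congr rfl; intro v _; rw [hP.2 v, mul_one]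
      _ = 1 := ih a

lemma pow_entry_le_one {Z : Type*} [Fintype Z] [DecidableEq Z] {P : Z → Z → ℝ}
    (hP : RowStochastic P) (m : ℕ) (a b : Z) : (Matrix.of P ^ m) a b ≤ 1 := by
  rw [← pow_row_sum hP m a]
  exact Finset.single_le_sum (fun v _ => pow_entry_nonneg hP m a v) (Finset.mem_univ b)

lemma avoidSum_nonneg {Z : Type*} [Fintype Z] [DecidableEq Z] {P : Z → Z → ℝ}
    (hP : RowStochastic P) (w : Z) : ∀ (m : ℕ) (u : Z), 0 ≤ avoidSum P w m u := by
  intro m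
  induction m with
  | zero =>
    intro u
    rw [avoidSum]
    split <;> norm_num
  | succ m ih =>
    intro u
    rw [avoidSum]
    split
    · rfl
    · exact Finset.sum_nonneg fun v _ => mul_nonneg (hP.1 u v) (ih v)

lemma avoidSum_le_one {Z : Type*} [Fintype Z] [DecidableEq Z] {P : Z → Z → ℝ}
    (hP : RowStochastic P) (w : Z) : ∀ (m : ℕ) (u : Z), avoidSum P w m u ≤ 1 := by
  intro m
  induction m with
  | zero =>
    intro u
    rw [avoidSum]
    split <;> norm_num
  | succ m ih =>
    intro u
    rw [avoidSum]
    split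
    · norm_num
    · calc ∑ v, P u v * avoidSum P w m v
          ≤ ∑ v, P u v * 1 := Finset.sum_le_sum fun v _ =>
            mul_le_mul_of_nonneg_left (ih v) (hP.1 u v)
        _ = 1 := by simp [hP.2 u]

lemma avoidSum_succ_le {Z : Type*} [Fintype Z] [DecidableEq Z] {P : Z → Z → ℝ}
    (hP : RowStochastic P) (w : Z) :
    ∀ (m : ℕ) (u : Z), avoidSum P w (m + 1) u ≤ avoidSum P w m u := by
  intro m
  induction m with
  | zero =>
    intro u
    rw [avoidSum, avoidSum]
    by_cases h : u = w
    · simp [h]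
    · rw [if_neg h, if_neg h]
      calc ∑ v, P u v * avoidSum P w 0 v
          ≤ ∑ v, P u v * 1 := Finset.sum_le_sum fun v _ =>
            mul_le_mul_of_nonneg_left (avoidSum_le_one hP w 0 v) (hP.1 u v)
        _ = 1 := by simp [hP.2 u]
  | succ m ih =>
    intro u
    rw [avoidSum, show avoidSum P w (m + 1) u = if u = w then 0 else
      ∑ v, P u v * avoidSum P w m v from rfl]
    by_cases h : u = w
    · simp [h]
    · rw [if_neg h, if_neg h]
      exact Finset.sum_le_sum fun v _ =>
        mul_le_mul_of_nonneg_left (ih v) (hP.1 u v)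

lemma avoidSum_anti {Z : Type*} [Fintype Z] [DecidableEq Z] {P : Z → Z → ℝ}
    (hP : RowStochastic P) (w : Z) {m n : ℕ} (h : m ≤ n) (u : Z) :
    avoidSum P w n u ≤ avoidSum P w m u := by
  induction n, h using Nat.le_induction with
  | base => exact le_refl _
  | succ n hmn ih => exact le_trans (avoidSum_succ_le hP w n u) ih

lemma avoidSum_le_sub {Z : Type*} [Fintype Z] [DecidableEq Z] {P : Z → Z → ℝ}
    (hP : RowStochastic P) (w : Z) :
    ∀ (m : ℕ) (u : Z), avoidSum P w m u ≤ 1 - (Matrix.of P ^ m) u w := by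
  intro m
  induction m with
  | zero =>
    intro u
    rw [avoidSum, pow_zero, Matrix.one_apply]
    by_cases h : u = w <;> simp [h]
  | succ m ih =>
    intro u
    rw [avoidSum]
    by_cases h : u = w
    · rw [if_pos h]
      linarith [pow_entry_le_one hP (m + 1) u w]
    · rw [if_neg h]
      have hmul : (Matrix.of P ^ (m + 1)) u w = ∑ v, P u v * (Matrix.of P ^ m) v w := by
        rw [pow_succ', Matrix.mul_apply]
        rfl
      calc ∑ v, P u v * avoidSum P w m v
          ≤ ∑ v, P u v * (1 - (Matrix.of P ^ m) v w) := Finset.sum_le_sum fun v _ =>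
            mul_le_mul_of_nonneg_left (ih v) (hP.1 u v)
        _ = (∑ v, P u v) - ∑ v, P u v * (Matrix.of P ^ m) v w := by
            rw [← Finset.sum_sub_distrib]
            apply Finset.sum_congr rfl
            intro v _
            ring
        _ = 1 - (Matrix.of P ^ (m + 1)) u w := by rw [hP.2 u, hmul]

theorem stmt_1 {Z : Type*} [Fintype Z] [Nonempty Z] [DecidableEq Z] (P : Z → Z → ℝ)
    (hP : RowStochastic P) (hirr : IsIrreducibleChain P) :
    ∃ t : ℕ, 1 ≤ t ∧ ∃ q : ℝ, 0 < q ∧ ∀ u w : Z,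
      ∑ x ∈ Finset.univ.filter
          (fun x : Fin (t + 1) → Z => x 0 = u ∧ ∀ i, x i ≠ w),
        pathProb P x ≤ 1 - q := by
  choose M hM1 hM2 using hirr
  set t := Finset.univ.sup (fun p : Z × Z => M p.1 p.2) with ht
  obtain ⟨z⟩ := ‹Nonempty Z›
  have ht1 : 1 ≤ t :=
    le_trans (hM1 z z) (Finset.le_sup (f := fun p : Z × Z => M p.1 p.2)
      (Finset.mem_univ (z, z)))
  refine ⟨t, ht1, Finset.univ.inf' Finset.univ_nonempty
      (fun p : Z × Z => (Matrix.of P ^ M p.1 p.2) p.1 p.2), ?_, ?_⟩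
  · rw [Finset.lt_inf'_iff]
    intro p _
    exact hM2 p.1 p.2
  · intro u w
    rw [avoidSum_eq]
    have h1 : avoidSum P w t u ≤ avoidSum P w (M u w) u :=
      avoidSum_anti hP w (Finset.le_sup (f := fun p : Z × Z => M p.1 p.2)
        (Finset.mem_univ (u, w))) u
    have h2 : avoidSum P w (M u w) u ≤ 1 - (Matrix.of P ^ M u w) u w :=
      avoidSum_le_sub hP w (M u w) u
    have h3 : Finset.univ.inf' Finset.univ_nonempty
        (fun p : Z × Z => (Matrix.of P ^ M p.1 p.2) p.1 p.2) ≤ (Matrix.of P ^ M u w) u w :=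
      Finset.inf'_le _ (Finset.mem_univ (u, w))
    linarith
end

section
/- Let Z be a nonempty finite type, P : Z → Z → ℝ a row-stochastic matrix that is irreducible, W ⊆ Z with at least two elements, and a, b ∈ W with a ≠ b. Then lim_{m→∞} G_b(m) = P(R^W_{a,b}), where G_b(m) is the sum of Prob(x) over all paths x of length m with x₀ = a that visit W∖{a} and whose first state belonging to W∖{a} is b. -/
open scoped Classical

/-- `F_b(m)`: the sum of `Prob(x)` over all paths `x` of length `m` with `x₀ = a` that
visit `W` and whose first state belonging to `W` is `b`. -/
noncomputable def firstVisitProb {Z : Type*} [Fintype Z] (P : Z → Z → ℝ) (W : Finset Z)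
    (a b : Z) (m : ℕ) : ℝ :=
  ∑ x ∈ Finset.univ.filter (fun x : Fin (m + 1) → Z =>
      x 0 = a ∧ ∃ j : Fin (m + 1), x j = b ∧ ∀ i < j, x i ∉ W),
    pathProb P x

/-- The probability `P(R^W_{a,b})` of the set of `W`-arrows from `a` to `b`:
the sum over all lengths `m ≥ 1` of the probabilities of paths `x` of length `m`
with `x₀ = a`, `x_m = b`, and `x_i ∈ W → x_i = a` for every `i < m`. -/
noncomputable def arrowProb {Z : Type*} [Fintype Z] (P : Z → Z → ℝ) (W : Finset Z)
    (a b : Z) : ℝ :=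
  ∑' m : ℕ, ∑ x ∈ Finset.univ.filter (fun x : Fin (m + 1 + 1) → Z =>
      x 0 = a ∧ x (Fin.last (m + 1)) = b ∧
      ∀ i : Fin (m + 1 + 1), i < Fin.last (m + 1) → x i ∈ W → x i = a),
    pathProb P x

/-!
A path of length `m + 1` from `a` whose first visit to `W \ {a}` is at `b` either makes that
visit within its first `m` steps or exactly at its last step. Summing over the last state, the
paths of the first kind contribute `G_b(m)` because `P` is stochastic, while those of the second
kind are precisely the `W`-arrows of length `m + 1`. Hence `G_b(m)` is the `m`-th partial sum of
the series defining `P(R^W_{a,b})`; its terms are nonnegative and its partial sums are bounded by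
the total mass `1`, so it converges to its sum.
-/

section Paths

variable {Z : Type*} {P : Z → Z → ℝ}

theorem pathProb_snoc {m : ℕ} (y : Fin (m + 1) → Z) (z : Z) :
    pathProb P (Fin.snoc y z : Fin (m + 2) → Z) = pathProb P y * P (y (Fin.last m)) z := by
  simp only [pathProb, Fin.prod_univ_castSucc, Fin.snoc_castSucc, Fin.succ_castSucc,
    Fin.succ_last, Fin.snoc_last]

theorem pathProb_nonneg (hP : ∀ a b, 0 ≤ P a b) {m : ℕ} (x : Fin (m + 1) → Z) :
    0 ≤ pathProb P x :=
  Finset.prod_nonneg fun _ _ => hP _ _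

variable [Fintype Z]

theorem sum_pathProb_snoc (hP : ∀ a, ∑ b, P a b = 1) {m : ℕ} (y : Fin (m + 1) → Z) :
    ∑ z, pathProb P (Fin.snoc y z : Fin (m + 2) → Z) = pathProb P y := by
  simp only [pathProb_snoc, ← Finset.mul_sum, hP, mul_one]

theorem sum_pathProb_filter_init (hP : ∀ a, ∑ b, P a b = 1) {m : ℕ}
    (Q : (Fin (m + 1) → Z) → Prop) :
    ∑ x ∈ Finset.univ.filter (fun x : Fin (m + 2) → Z => Q (Fin.init x)), pathProb P x =
      ∑ y ∈ Finset.univ.filter Q, pathProb P y := by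
  rw [Finset.sum_filter, Finset.sum_filter, ← (Fin.snocEquiv fun _ => Z).sum_comp,
    Fintype.sum_prod_type, Finset.sum_comm]
  refine Finset.sum_congr rfl fun y _ => ?_
  simp only [Fin.snocEquiv, Equiv.coe_fn_mk, Fin.init_snoc, Finset.sum_ite_irrel,
    sum_pathProb_snoc hP, Finset.sum_const_zero]

theorem sum_pathProb_start_eq_one (hP : ∀ a, ∑ b, P a b = 1) (a : Z) (m : ℕ) :
    ∑ x ∈ Finset.univ.filter (fun x : Fin (m + 1) → Z => x 0 = a), pathProb P x = 1 := by
  induction m with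
  | zero =>
    rw [Finset.sum_eq_single_of_mem (fun _ => a) (by simp)]
    · simp [pathProb]
    · intro x hx hne
      exact absurd (funext fun i => (Fin.fin_one_eq_zero i ▸ (Finset.mem_filter.1 hx).2)) hne
  | succ m ih => exact (sum_pathProb_filter_init hP (fun y => y 0 = a)).trans ih

theorem firstVisitProb_le_one (hP : RowStochastic P) {V : Finset Z} {a b : Z} (m : ℕ) :
    firstVisitProb P V a b m ≤ 1 := by
  rw [← sum_pathProb_start_eq_one hP.2 a m]
  exact Finset.sum_le_sum_of_subset_of_nonneg
    (Finset.monotone_filter_right _ fun _ _ => And.left) fun x _ _ => pathProb_nonneg hP.1 x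

end Paths

section FirstVisits

variable {Z : Type*} (V : Finset Z) (a b : Z)

def IsFirstVisitPath {m : ℕ} (x : Fin (m + 1) → Z) : Prop :=
  x 0 = a ∧ ∃ j, x j = b ∧ ∀ i < j, x i ∉ V

/-- For `V = W.erase a` these are the `W`-arrows from `a` to `b`. -/
def IsArrowPath {m : ℕ} (x : Fin (m + 1) → Z) : Prop :=
  x 0 = a ∧ x (Fin.last m) = b ∧ ∀ i < Fin.last m, x i ∉ V

variable {V a b}

theorem isFirstVisitPath_iff_init_or_isArrowPath {m : ℕ} (x : Fin (m + 2) → Z) :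
    IsFirstVisitPath V a b x ↔ IsFirstVisitPath V a b (Fin.init x) ∨ IsArrowPath V a b x := by
  constructor
  · rintro ⟨hx0, j, hjb, hj⟩
    rcases Fin.eq_castSucc_or_eq_last j with ⟨j, rfl⟩ | rfl
    · exact Or.inl ⟨hx0, j, hjb, fun i hi => hj _ (Fin.castSucc_lt_castSucc_iff.2 hi)⟩
    · exact Or.inr ⟨hx0, hjb, hj⟩
  · rintro (⟨hx0, j, hjb, hj⟩ | ⟨hx0, hxb, hx⟩)
    · refine ⟨hx0, j.castSucc, hjb, fun i hi => ?_⟩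
      obtain ⟨i, rfl⟩ := Fin.exists_castSucc_eq.2 (Fin.ne_last_of_lt hi)
      exact hj i (Fin.castSucc_lt_castSucc_iff.1 hi)
    · exact ⟨hx0, _, hxb, hx⟩

theorem not_isArrowPath_of_isFirstVisitPath_init (hb : b ∈ V) {m : ℕ} {x : Fin (m + 2) → Z}
    (hx : IsFirstVisitPath V a b (Fin.init x)) : ¬IsArrowPath V a b x := by
  obtain ⟨-, j, hjb, -⟩ := hx
  rintro ⟨-, -, hx⟩
  exact hx j.castSucc (Fin.castSucc_lt_last j) ((show x j.castSucc = b from hjb) ▸ hb)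

end FirstVisits

section ArrowDecomposition

variable {Z : Type*} [Fintype Z] {P : Z → Z → ℝ} {V : Finset Z} {a b : Z}

variable (P V a b) in
noncomputable def arrowMass (m : ℕ) : ℝ :=
  ∑ x ∈ Finset.univ.filter (IsArrowPath V a b (m := m + 1)), pathProb P x

theorem firstVisitProb_eq_sum_filter (m : ℕ) :
    firstVisitProb P V a b m =
      ∑ x ∈ Finset.univ.filter (IsFirstVisitPath V a b (m := m)), pathProb P x := by
  unfold firstVisitProb IsFirstVisitPath
  congr

theorem firstVisitProb_zero (hab : a ≠ b) : firstVisitProb P V a b 0 = 0 := by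
  refine Finset.sum_eq_zero fun x hx => absurd ?_ hab
  obtain ⟨hx0, j, hjb, -⟩ := (Finset.mem_filter.1 hx).2
  rwa [Fin.fin_one_eq_zero j, hx0] at hjb

theorem firstVisitProb_succ (hP : ∀ a, ∑ b, P a b = 1) (hb : b ∈ V) (m : ℕ) :
    firstVisitProb P V a b (m + 1) = firstVisitProb P V a b m + arrowMass P V a b m := by
  have hsplit : Finset.univ.filter (IsFirstVisitPath V a b (m := m + 1)) =
      Finset.univ.filter (fun x => IsFirstVisitPath V a b (Fin.init x)) ∪
        Finset.univ.filter (IsArrowPath V a b) := by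
    rw [← Finset.filter_or]
    exact Finset.filter_congr fun x _ => isFirstVisitPath_iff_init_or_isArrowPath x
  have hdisj : Disjoint (Finset.univ.filter (fun x : Fin (m + 2) → Z =>
      IsFirstVisitPath V a b (Fin.init x))) (Finset.univ.filter (IsArrowPath V a b)) :=
    Finset.disjoint_filter.2 fun _ _ => not_isArrowPath_of_isFirstVisitPath_init hb
  rw [firstVisitProb_eq_sum_filter, hsplit, Finset.sum_union hdisj, sum_pathProb_filter_init hP,
    ← firstVisitProb_eq_sum_filter, arrowMass]

theorem firstVisitProb_eq_sum_arrowMass (hP : ∀ a, ∑ b, P a b = 1) (hb : b ∈ V) (hab : a ≠ b)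
    (m : ℕ) : firstVisitProb P V a b m = ∑ k ∈ Finset.range m, arrowMass P V a b k := by
  induction m with
  | zero => exact firstVisitProb_zero hab
  | succ m ih => rw [firstVisitProb_succ hP hb, ih, Finset.sum_range_succ]

theorem arrowProb_eq_tsum_arrowMass [DecidableEq Z] (W : Finset Z) :
    arrowProb P W a b = ∑' m, arrowMass P (W.erase a) a b m := by
  unfold arrowProb arrowMass IsArrowPath
  congr! 4 with m x
  simp only [Finset.mem_erase, not_and', not_not]

end ArrowDecomposition

theorem stmt_6_general {Z : Type*} [Fintype Z] [DecidableEq Z] (P : Z → Z → ℝ)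
    (hP : RowStochastic P)
    (W : Finset Z) (a b : Z) (hb : b ∈ W) (hab : a ≠ b) :
    Filter.Tendsto (fun m : ℕ => firstVisitProb P (W.erase a) a b m)
      Filter.atTop (nhds (arrowProb P W a b)) := by
  have hbV : b ∈ W.erase a := Finset.mem_erase.2 ⟨hab.symm, hb⟩
  have hpartial := firstVisitProb_eq_sum_arrowMass hP.2 hbV hab
  have hsummable : Summable (arrowMass P (W.erase a) a b) :=
    summable_of_sum_range_le (fun m => Finset.sum_nonneg fun x _ => pathProb_nonneg hP.1 x)
      fun m => hpartial m ▸ firstVisitProb_le_one hP m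
  rw [arrowProb_eq_tsum_arrowMass]
  exact hsummable.hasSum.tendsto_sum_nat.congr fun m => (hpartial m).symm

theorem stmt_6 {Z : Type*} [Fintype Z] [Nonempty Z] [DecidableEq Z] (P : Z → Z → ℝ)
    (hP : RowStochastic P) (hirr : IsIrreducibleChain P)
    (W : Finset Z) (hW : 2 ≤ W.card) (a b : Z) (ha : a ∈ W) (hb : b ∈ W) (hab : a ≠ b) :
    Filter.Tendsto (fun m : ℕ => firstVisitProb P (W.erase a) a b m)
      Filter.atTop (nhds (arrowProb P W a b)) :=
  stmt_6_general P hP W a b hb hab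
end

section
/- Let Z be a nonempty finite type, P : Z → Z → ℝ a row-stochastic matrix that is irreducible, V : Z → Z → ℝ a matrix with all entries positive, and a, b ∈ Z. Then the mean weighted hitting time from a to b is finite: the family of nonnegative terms Weight(V,x)·Prob(x), indexed by all first-hitting paths x from a to b (of all lengths m ≥ 1), is summable; equivalently the series ∑_{m=1}^∞ ∑_{x ∈ S^m_{⟨a,b⟩}} Weight(V,x)·Prob(x) converges. -/
open scoped Classical

/-- Weight of a path `x = (x₀, …, x_m)` with weight matrix `V`:
`Weight(V,x) = ∑_{i=1}^m V(x_{i-1}, x_i)`. -/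
def pathWeight {Z : Type*} (V : Z → Z → ℝ) {m : ℕ} (x : Fin (m + 1) → Z) : ℝ :=
  ∑ i : Fin m, V (x i.castSucc) (x i.succ)

set_option linter.unusedSectionVars false
set_option linter.unusedVariables false
set_option maxHeartbeats 1000000

namespace Stmt9Aux

variable {Z : Type*} [Fintype Z] [Nonempty Z] [DecidableEq Z]

/-- `gh M h m z = ∑_v (M^m)_{z v} h v`, defined recursively. -/
noncomputable def gh (M : Matrix Z Z ℝ) (h : Z → ℝ) : ℕ → Z → ℝ
  | 0, z => h z
  | (m+1), z => ∑ w, M z w * gh M h m w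

lemma gh_zero (M : Matrix Z Z ℝ) (h : Z → ℝ) (z : Z) : gh M h 0 z = h z := rfl

lemma gh_succ (M : Matrix Z Z ℝ) (h : Z → ℝ) (m : ℕ) (z : Z) :
    gh M h (m+1) z = ∑ w, M z w * gh M h m w := rfl

lemma gh_eq_pow (M : Matrix Z Z ℝ) (h : Z → ℝ) (m : ℕ) (z : Z) :
    gh M h m z = ∑ v, (M ^ m) z v * h v := by
  induction m generalizing z with
  | zero => simp [gh, Matrix.one_apply]
  | succ m ih =>
    rw [gh_succ]
    simp_rw [ih, Finset.mul_sum, pow_succ', Matrix.mul_apply, Finset.sum_mul]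
    rw [Finset.sum_comm]
    exact Finset.sum_congr rfl fun v _ => Finset.sum_congr rfl fun w _ => by ring

lemma gh_nonneg (M : Matrix Z Z ℝ) (h : Z → ℝ) (hM : ∀ u v, 0 ≤ M u v)
    (hh : ∀ v, 0 ≤ h v) (m : ℕ) (z : Z) : 0 ≤ gh M h m z := by
  induction m generalizing z with
  | zero => exact hh z
  | succ m ih =>
    rw [gh_succ]
    exact Finset.sum_nonneg fun w _ => mul_nonneg (hM z w) (ih w)

lemma gh_le_one (M : Matrix Z Z ℝ) (h : Z → ℝ) (hM : ∀ u v, 0 ≤ M u v)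
    (hMr : ∀ u, ∑ v, M u v ≤ 1) (hh1 : ∀ v, h v ≤ 1)
    (m : ℕ) (z : Z) : gh M h m z ≤ 1 := by
  induction m generalizing z with
  | zero => exact hh1 z
  | succ m ih =>
    rw [gh_succ]
    calc ∑ w, M z w * gh M h m w ≤ ∑ w, M z w * 1 :=
          Finset.sum_le_sum fun w _ => mul_le_mul_of_nonneg_left (ih w) (hM z w)
      _ ≤ 1 := by simpa using hMr z

lemma pathProb_cons (M : Z → Z → ℝ) {m : ℕ} (z : Z) (t : Fin (m+1) → Z) :
    pathProb M (Fin.cons z t) = M z (t 0) * pathProb M t := by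
  rw [pathProb, Fin.prod_univ_succ, pathProb]
  congr 1

/-- Sum of path probabilities over all paths of length `m` from `z` is the
row sum of the `m`-th matrix power. -/
lemma sum_path_eq_gh (P' : Z → Z → ℝ) (m : ℕ) (z : Z) :
    ∑ y : Fin (m+1) → Z, (if y 0 = z then pathProb P' y else 0)
      = gh (Matrix.of P') (fun _ => (1:ℝ)) m z := by
  induction m generalizing z with
  | zero =>
    rw [gh_zero]
    rw [← Equiv.sum_comp (Equiv.funUnique (Fin 1) Z).symm]
    simp [pathProb, Equiv.funUnique]
  | succ m ih =>
    rw [← Equiv.sum_comp (Fin.consEquiv (fun _ : Fin (m+2) => Z))]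
    rw [Fintype.sum_prod_type]
    have hce : ∀ (w : Z) (t : Fin (m+1) → Z),
        ((Fin.consEquiv (fun _ : Fin (m+2) => Z)) (w, t)) = Fin.cons w t := fun _ _ => rfl
    simp_rw [hce, Fin.cons_zero, pathProb_cons]
    have key : ∀ w : Z, ∑ t : Fin (m+1) → Z,
        (if w = z then P' w (t 0) * pathProb P' t else 0)
        = if w = z then ∑ t : Fin (m+1) → Z, P' w (t 0) * pathProb P' t else 0 := by
      intro w; split <;> simp
    simp_rw [key]
    rw [Finset.sum_ite_eq' Finset.univ z
      (fun w => ∑ t : Fin (m+1) → Z, P' w (t 0) * pathProb P' t)]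
    simp only [Finset.mem_univ, if_true]
    rw [gh_succ]
    have regroup : ∀ t : Fin (m+1) → Z, P' z (t 0) * pathProb P' t
        = ∑ w, (if t 0 = w then P' z w * pathProb P' t else 0) := by
      intro t
      rw [Finset.sum_ite_eq Finset.univ (t 0) (fun w => P' z w * pathProb P' t)]
      simp
    simp_rw [regroup]
    rw [Finset.sum_comm]
    refine Finset.sum_congr rfl fun w _ => ?_
    rw [← ih w, Finset.mul_sum]
    refine Finset.sum_congr rfl fun t _ => ?_
    split <;> simp

section Chain

/-- taboo transition function: transitions into `b` are killed. -/
noncomputable def Qf (P : Z → Z → ℝ) (b : Z) : Z → Z → ℝ :=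
  fun z w => if w = b then 0 else P z w

/-- non-hitting probability: `r P b m z` is the probability of avoiding `b`
during steps `1..m` when started at `z`. -/
noncomputable def r (P : Z → Z → ℝ) (b : Z) : ℕ → Z → ℝ :=
  gh (Matrix.of (Qf P b)) (fun _ => 1)

/-- indicator of `b`. -/
noncomputable def db (b : Z) : Z → ℝ := fun v => if v = b then 1 else 0

variable {P : Z → Z → ℝ} {b : Z} (hP : RowStochastic P)
include hP

lemma Qf_nonneg (u v : Z) : 0 ≤ Qf P b u v := by
  unfold Qf; split
  · exact le_refl 0
  · exact hP.1 u v

lemma Qf_le (u v : Z) : Qf P b u v ≤ P u v := by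
  unfold Qf; split
  · exact hP.1 u v
  · exact le_refl _

lemma Qf_row (u : Z) : ∑ v, Qf P b u v = 1 - P u b := by
  have : ∀ v, Qf P b u v = P u v - (if v = b then P u b else 0) := by
    intro v; unfold Qf; split <;> simp_all
  simp_rw [this]
  rw [Finset.sum_sub_distrib, hP.2 u, Finset.sum_ite_eq' Finset.univ b (fun v => P u b)]
  simp

lemma Qf_row_le_one (u : Z) : ∑ v, Qf P b u v ≤ 1 := by
  rw [Qf_row hP]
  have := hP.1 u b; linarith

lemma r_nonneg (m : ℕ) (z : Z) : 0 ≤ r P b m z :=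
  gh_nonneg _ _ (fun u v => Qf_nonneg hP u v) (fun _ => zero_le_one) m z

lemma r_le_one (m : ℕ) (z : Z) : r P b m z ≤ 1 :=
  gh_le_one _ _ (fun u v => Qf_nonneg hP u v) (fun u => Qf_row_le_one hP u)
    (fun _ => le_refl 1) m z

lemma P_le_one (u v : Z) : P u v ≤ 1 := by
  rw [← hP.2 u]
  exact Finset.single_le_sum (fun w _ => hP.1 u w) (Finset.mem_univ v)

lemma gh_db_eq_pow (m : ℕ) (z : Z) :
    gh (Matrix.of P) (db b) m z = ((Matrix.of P) ^ m) z b := by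
  rw [gh_eq_pow]
  unfold db
  simp_rw [mul_ite, mul_one, mul_zero]
  rw [Finset.sum_ite_eq' Finset.univ b (fun v => ((Matrix.of P) ^ m) z v)]
  simp

lemma gh_db_nonneg (m : ℕ) (z : Z) : 0 ≤ gh (Matrix.of P) (db b) m z :=
  gh_nonneg _ _ (fun u v => hP.1 u v) (fun v => by unfold db; split <;> norm_num) m z

lemma gh_db_le_one (m : ℕ) (z : Z) : gh (Matrix.of P) (db b) m z ≤ 1 :=
  gh_le_one _ _ (fun u v => hP.1 u v) (fun u => le_of_eq (hP.2 u))
    (fun v => by unfold db; split <;> norm_num) m z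

/-- avoiding `b` for `j+1` steps plus being at `b` at time `j+1` has total
probability at most `1`. -/
lemma avoid_add_hit_le_one (j : ℕ) (z : Z) :
    r P b (j+1) z + gh (Matrix.of P) (db b) (j+1) z ≤ 1 := by
  induction j generalizing z with
  | zero =>
    have h1 : r P b 1 z = 1 - P z b := by
      unfold r; rw [gh_succ]; simp only [gh_zero, mul_one]
      exact Qf_row hP z
    have h2 : gh (Matrix.of P) (db b) 1 z = P z b := by
      rw [gh_db_eq_pow hP, pow_one]; rfl
    rw [h1, h2]; linarith
  | succ j ih =>
    have e1 : r P b (j+2) z = ∑ w, Qf P b z w * r P b (j+1) w := by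
      unfold r; rw [gh_succ]; rfl
    have e2 : gh (Matrix.of P) (db b) (j+2) z
        = ∑ w, P z w * gh (Matrix.of P) (db b) (j+1) w := by
      rw [gh_succ]; rfl
    rw [e1, e2, ← Finset.sum_add_distrib]
    have key : ∀ w, Qf P b z w * r P b (j+1) w
        + P z w * gh (Matrix.of P) (db b) (j+1) w ≤ P z w := by
      intro w
      have hq0 := Qf_nonneg (P := P) (b := b) hP z w
      have hql := Qf_le (P := P) (b := b) hP z w
      have hr0 := r_nonneg (P := P) (b := b) hP (j+1) w
      have hd0 := gh_db_nonneg (P := P) (b := b) hP (j+1) w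
      have hd1 := gh_db_le_one (P := P) (b := b) hP (j+1) w
      have hsum := ih w
      nlinarith
    calc ∑ w, (Qf P b z w * r P b (j+1) w + P z w * gh (Matrix.of P) (db b) (j+1) w)
        ≤ ∑ w, P z w := Finset.sum_le_sum fun w _ => key w
      _ = 1 := hP.2 z

lemma r_le_one_sub_pow (j : ℕ) (z : Z) :
    r P b (j+1) z ≤ 1 - ((Matrix.of P) ^ (j+1)) z b := by
  have := avoid_add_hit_le_one (P := P) (b := b) hP j z
  rw [gh_db_eq_pow hP] at this
  linarith

lemma r_succ_le (m : ℕ) (z : Z) : r P b (m+1) z ≤ r P b m z := by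
  induction m generalizing z with
  | zero =>
    have : r P b 0 z = 1 := rfl
    rw [this]; exact r_le_one hP 1 z
  | succ m ih =>
    show gh _ _ (m+1+1) z ≤ gh _ _ (m+1) z
    rw [gh_succ, gh_succ]
    exact Finset.sum_le_sum fun w _ =>
      mul_le_mul_of_nonneg_left (ih w) (Qf_nonneg hP z w)

lemma r_antitone {n m : ℕ} (hnm : n ≤ m) (z : Z) : r P b m z ≤ r P b n z := by
  induction m with
  | zero => simp_all
  | succ m ih =>
    rcases Nat.lt_or_ge n (m+1) with h | h
    · exact le_trans (r_succ_le hP m z) (ih (Nat.lt_succ_iff.mp h))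
    · have : n = m + 1 := le_antisymm hnm h
      subst this; exact le_refl _

lemma r_add_le {K : ℕ} {c : ℝ} (hc : ∀ w, r P b K w ≤ c) (n : ℕ) (z : Z) :
    r P b (n + K) z ≤ c * r P b n z := by
  induction n generalizing z with
  | zero =>
    have h0 : r P b 0 z = 1 := rfl
    rw [Nat.zero_add, h0, mul_one]; exact hc z
  | succ n ih =>
    have e : n + 1 + K = (n + K) + 1 := by omega
    rw [e]
    show gh _ _ ((n+K)+1) z ≤ _
    rw [gh_succ]
    have : r P b (n+1) z = ∑ w, Qf P b z w * r P b n w := by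
      unfold r; rw [gh_succ]; rfl
    rw [this, Finset.mul_sum]
    refine Finset.sum_le_sum fun w _ => ?_
    have h1 : (Qf P b z w) * gh (Matrix.of (Qf P b)) (fun _ => 1) (n+K) w
        ≤ Qf P b z w * (c * r P b n w) :=
      mul_le_mul_of_nonneg_left (ih w) (Qf_nonneg hP z w)
    calc Matrix.of (Qf P b) z w * gh (Matrix.of (Qf P b)) (fun _ => 1) (n + K) w
        ≤ Qf P b z w * (c * r P b n w) := h1
      _ = c * (Qf P b z w * r P b n w) := by ring

lemma r_mul_le {K : ℕ} {c : ℝ} (hc : ∀ w, r P b K w ≤ c) (hc0 : 0 ≤ c) (q : ℕ) (z : Z) :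
    r P b (q * K) z ≤ c ^ q := by
  induction q generalizing z with
  | zero => simp [r, gh_zero]
  | succ q ih =>
    have e : (q + 1) * K = q * K + K := by ring
    rw [e]
    calc r P b (q * K + K) z ≤ c * r P b (q * K) z := r_add_le hP hc _ z
      _ ≤ c * c ^ q := mul_le_mul_of_nonneg_left (ih z) hc0
      _ = c ^ (q+1) := by ring

/-- geometric decay of the avoidance probability. -/
lemma r_geometric (hirr : IsIrreducibleChain P) :
    ∃ C θ : ℝ, 0 < C ∧ 0 ≤ θ ∧ θ < 1 ∧ ∀ n z, r P b n z ≤ C * θ ^ n := by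
  have hex : ∀ w : Z, ∃ m : ℕ, 1 ≤ m ∧ 0 < (Matrix.of P ^ m) w b := fun w => hirr w b
  choose k hk1 hk2 using hex
  set K : ℕ := Finset.univ.sup k with hK
  have hkK : ∀ w, k w ≤ K := fun w => Finset.le_sup (Finset.mem_univ w)
  have hK1 : 1 ≤ K := le_trans (hk1 (Classical.arbitrary Z)) (hkK _)
  set ε : ℝ := Finset.univ.inf' Finset.univ_nonempty (fun w => (Matrix.of P ^ k w) w b)
    with hε
  have hε0 : 0 < ε := by
    rw [hε, Finset.lt_inf'_iff]
    exact fun w _ => hk2 w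
  set c : ℝ := max (1 - ε) (1/2) with hc
  have hc0 : (0:ℝ) < c := lt_of_lt_of_le (by norm_num) (le_max_right _ _)
  have hc1 : c < 1 := by
    rw [hc]
    apply max_lt <;> [linarith; norm_num]
  have hrK : ∀ w, r P b K w ≤ c := by
    intro w
    have h1 : r P b K w ≤ r P b (k w) w := r_antitone hP (hkK w) w
    have h2 : r P b (k w) w ≤ 1 - (Matrix.of P ^ (k w)) w b := by
      have hkw1 := hk1 w
      have e : k w = (k w - 1) + 1 := by omega
      rw [e]
      exact r_le_one_sub_pow hP _ _
    have h3 : ε ≤ (Matrix.of P ^ (k w)) w b := by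
      rw [hε]
      exact Finset.inf'_le _ (Finset.mem_univ w)
    calc r P b K w ≤ 1 - (Matrix.of P ^ (k w)) w b := le_trans h1 h2
      _ ≤ 1 - ε := by linarith
      _ ≤ c := le_max_left _ _
  set θ : ℝ := c ^ ((K : ℝ)⁻¹) with hθ
  have hθ0 : 0 < θ := Real.rpow_pos_of_pos hc0 _
  have hθ1 : θ < 1 := Real.rpow_lt_one hc0.le hc1 (by positivity)
  have hθK : θ ^ K = c := by
    rw [hθ, ← Real.rpow_natCast (c ^ ((K:ℝ)⁻¹)) K, ← Real.rpow_mul hc0.le,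
      inv_mul_cancel₀ (by positivity), Real.rpow_one]
  refine ⟨c⁻¹, θ, by positivity, hθ0.le, hθ1, fun n z => ?_⟩
  have h1 : r P b n z ≤ c ^ (n / K) := by
    calc r P b n z ≤ r P b ((n / K) * K) z :=
          r_antitone hP (Nat.div_mul_le_self n K) z
      _ ≤ c ^ (n / K) := r_mul_le hP hrK hc0.le _ z
  have h2 : c * c ^ (n / K) ≤ θ ^ n := by
    have e : n = K * (n / K) + n % K := (Nat.div_add_mod n K).symm
    calc c * c ^ (n / K) = θ ^ K * (θ ^ K) ^ (n / K) := by rw [hθK]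
      _ = θ ^ K * θ ^ (K * (n / K)) := by rw [← pow_mul]
      _ ≤ θ ^ (n % K) * θ ^ (K * (n / K)) := by
          refine mul_le_mul_of_nonneg_right ?_ (by positivity)
          exact pow_le_pow_of_le_one hθ0.le hθ1.le
            (le_of_lt (Nat.mod_lt _ (by omega)))
      _ = θ ^ (K * (n / K) + n % K) := by rw [← pow_add]; ring_nf
      _ = θ ^ n := by rw [← e]
  calc r P b n z ≤ c ^ (n / K) := h1
    _ ≤ c⁻¹ * θ ^ n := by
        rw [le_inv_mul_iff₀ hc0]
        exact h2

/-- sum of taboo path probabilities equals the avoidance probability. -/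
lemma sum_path_le_r (m : ℕ) (a : Z) :
    ∑ y ∈ Finset.univ.filter (fun y : Fin (m+1) → Z => y 0 = a), pathProb (Qf P b) y
      = r P b m a := by
  rw [Finset.sum_filter]
  exact sum_path_eq_gh (Qf P b) m a

/-- The key per-length bound: the weighted sum over first-hitting paths of a
given length is controlled by the avoidance probability. -/
lemma hit_sum_le (V : Z → Z → ℝ) (hV : ∀ u v, 0 < V u v) {Vmax : ℝ}
    (hVle : ∀ u v, V u v ≤ Vmax) (a : Z) (m : ℕ) :
    ∑ x ∈ Finset.univ.filter (fun x : Fin (m + 1 + 1) → Z =>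
        x 0 = a ∧ x (Fin.last (m + 1)) = b ∧
        ∀ i : Fin (m + 1 + 1), i < Fin.last (m + 1) → x i ≠ b),
      pathWeight V x * pathProb P x
    ≤ ((m : ℝ) + 1) * Vmax * r P b m a := by
  set S := Finset.univ.filter (fun x : Fin (m + 1 + 1) → Z =>
        x 0 = a ∧ x (Fin.last (m + 1)) = b ∧
        ∀ i : Fin (m + 1 + 1), i < Fin.last (m + 1) → x i ≠ b) with hS
  set initp : (Fin (m + 1 + 1) → Z) → (Fin (m + 1) → Z) :=
    fun x => fun j => x j.castSucc with hinit
  have hVmax0 : 0 ≤ Vmax := le_trans (hV a b).le (hVle a b)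
  have hweight : ∀ x : Fin (m + 1 + 1) → Z, pathWeight V x ≤ ((m : ℝ) + 1) * Vmax := by
    intro x
    have := Finset.sum_le_card_nsmul Finset.univ
      (fun i : Fin (m+1) => V (x i.castSucc) (x i.succ)) Vmax
      (fun i _ => hVle _ _)
    simpa [pathWeight, nsmul_eq_mul, mul_comm, add_comm] using this
  have hweight0 : ∀ x : Fin (m + 1 + 1) → Z, 0 ≤ pathWeight V x := by
    intro x
    exact Finset.sum_nonneg fun i _ => (hV _ _).le
  have hprob0 : ∀ x : Fin (m + 1 + 1) → Z, 0 ≤ pathProb P x := fun x =>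
    Finset.prod_nonneg fun i _ => hP.1 _ _
  have hprobQ0 : ∀ y : Fin (m + 1) → Z, 0 ≤ pathProb (Qf P b) y := fun y =>
    Finset.prod_nonneg fun i _ => Qf_nonneg hP _ _
  have hprob : ∀ x ∈ S, pathProb P x ≤ pathProb (Qf P b) (initp x) := by
    intro x hx
    rw [hS, Finset.mem_filter] at hx
    obtain ⟨-, hx0, hxl, hxav⟩ := hx
    have split : pathProb P x
        = (∏ i : Fin m, P (x i.castSucc.castSucc) (x i.castSucc.succ))
          * P (x (Fin.last m).castSucc) (x (Fin.last m).succ) := by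
      rw [pathProb, Fin.prod_univ_castSucc]
    have heq : (∏ i : Fin m, P (x i.castSucc.castSucc) (x i.castSucc.succ))
        = pathProb (Qf P b) (initp x) := by
      rw [pathProb]
      refine Finset.prod_congr rfl fun i _ => ?_
      have hne : x i.castSucc.succ ≠ b := by
        rw [Fin.succ_castSucc]
        exact hxav _ (Fin.castSucc_lt_last _)
      have : Qf P b (initp x i.castSucc) (initp x i.succ)
          = P (x i.castSucc.castSucc) (x i.castSucc.succ) := by
        rw [hinit]
        simp only
        rw [Fin.succ_castSucc]
        unfold Qf
        rw [if_neg (by rw [← Fin.succ_castSucc]; exact hne)]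
      rw [this]
    rw [split, heq]
    calc pathProb (Qf P b) (initp x) * P (x (Fin.last m).castSucc) (x (Fin.last m).succ)
        ≤ pathProb (Qf P b) (initp x) * 1 :=
          mul_le_mul_of_nonneg_left (P_le_one hP _ _) (hprobQ0 _)
      _ = pathProb (Qf P b) (initp x) := mul_one _
  have step1 : ∑ x ∈ S, pathWeight V x * pathProb P x
      ≤ ∑ x ∈ S, (((m : ℝ) + 1) * Vmax) * pathProb (Qf P b) (initp x) := by
    refine Finset.sum_le_sum fun x hx => ?_
    exact mul_le_mul (hweight x) (hprob x hx) (hprob0 x) (by positivity)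
  have injS : ∀ x ∈ S, ∀ y ∈ S, initp x = initp y → x = y := by
    intro x hx y hy hxy
    rw [hS, Finset.mem_filter] at hx hy
    funext i
    refine Fin.lastCases ?_ (fun j => ?_) i
    · rw [hx.2.2.1, hy.2.2.1]
    · exact congrFun hxy j
  have step2 : ∑ x ∈ S, pathProb (Qf P b) (initp x)
      = ∑ y ∈ S.image initp, pathProb (Qf P b) y := (Finset.sum_image injS).symm
  have step3 : S.image initp ⊆ Finset.univ.filter (fun y : Fin (m+1) → Z => y 0 = a) := by
    intro y hy
    rw [Finset.mem_image] at hy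
    obtain ⟨x, hx, rfl⟩ := hy
    rw [hS, Finset.mem_filter] at hx
    rw [Finset.mem_filter]
    refine ⟨Finset.mem_univ _, ?_⟩
    show x (0 : Fin (m+1)).castSucc = a
    rw [Fin.castSucc_zero]
    exact hx.2.1
  have step4 : ∑ y ∈ S.image initp, pathProb (Qf P b) y
      ≤ ∑ y ∈ Finset.univ.filter (fun y : Fin (m+1) → Z => y 0 = a),
          pathProb (Qf P b) y :=
    Finset.sum_le_sum_of_subset_of_nonneg step3 (fun y _ _ => hprobQ0 y)
  calc ∑ x ∈ S, pathWeight V x * pathProb P x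
      ≤ ∑ x ∈ S, (((m : ℝ) + 1) * Vmax) * pathProb (Qf P b) (initp x) := step1
    _ = (((m : ℝ) + 1) * Vmax) * ∑ x ∈ S, pathProb (Qf P b) (initp x) := by
        rw [Finset.mul_sum]
    _ ≤ (((m : ℝ) + 1) * Vmax) * r P b m a := by
        refine mul_le_mul_of_nonneg_left ?_ (by positivity)
        rw [step2, ← sum_path_le_r hP m a]
        exact step4

end Chain

end Stmt9Aux

open Stmt9Aux in
theorem stmt_9 {Z : Type*} [Fintype Z] [Nonempty Z] [DecidableEq Z] (P : Z → Z → ℝ)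
    (hP : RowStochastic P) (hirr : IsIrreducibleChain P)
    (V : Z → Z → ℝ) (hV : ∀ a b, 0 < V a b) (a b : Z) :
    -- the family of terms `Weight(V,x)·Prob(x)`, indexed by all first-hitting
    -- paths from `a` to `b` of all lengths `m ≥ 1`, is summable …
    Summable (fun p : {p : Σ m : ℕ, Fin (m + 1 + 1) → Z //
        p.2 0 = a ∧ p.2 (Fin.last (p.1 + 1)) = b ∧
        ∀ i : Fin (p.1 + 1 + 1), i < Fin.last (p.1 + 1) → p.2 i ≠ b} =>
      pathWeight V (p : Σ m : ℕ, Fin (m + 1 + 1) → Z).2 *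
        pathProb P (p : Σ m : ℕ, Fin (m + 1 + 1) → Z).2) ∧
    -- … equivalently, the series `∑_m ∑_{x ∈ S^m_{⟨a,b⟩}} Weight(V,x)·Prob(x)` converges
    Summable (fun m : ℕ => ∑ x ∈ Finset.univ.filter (fun x : Fin (m + 1 + 1) → Z =>
        x 0 = a ∧ x (Fin.last (m + 1)) = b ∧
        ∀ i : Fin (m + 1 + 1), i < Fin.last (m + 1) → x i ≠ b),
      pathWeight V x * pathProb P x) := by
  obtain ⟨C, θ, hC0, hθ0, hθ1, hgeom⟩ := r_geometric (b := b) hP hirr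
  set Vmax : ℝ := ∑ u : Z, ∑ v : Z, V u v with hVmax
  have hVle : ∀ u v : Z, V u v ≤ Vmax := by
    intro u v
    calc V u v ≤ ∑ v : Z, V u v :=
          Finset.single_le_sum (fun w _ => (hV u w).le) (Finset.mem_univ v)
      _ ≤ Vmax := Finset.single_le_sum
          (fun w _ => Finset.sum_nonneg fun w' _ => (hV w w').le) (Finset.mem_univ u)
  have hVmax0 : 0 ≤ Vmax := le_trans (hV a b).le (hVle a b)
  set T : ℕ → ℝ := fun m => ∑ x ∈ Finset.univ.filter (fun x : Fin (m + 1 + 1) → Z =>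
        x 0 = a ∧ x (Fin.last (m + 1)) = b ∧
        ∀ i : Fin (m + 1 + 1), i < Fin.last (m + 1) → x i ≠ b),
      pathWeight V x * pathProb P x with hT
  have hTnn : ∀ m, 0 ≤ T m := by
    intro m
    refine Finset.sum_nonneg fun x _ => mul_nonneg ?_ ?_
    · exact Finset.sum_nonneg fun i _ => (hV _ _).le
    · exact Finset.prod_nonneg fun i _ => hP.1 _ _
  have hTle : ∀ m, T m ≤ ((m : ℝ) + 1) * Vmax * (C * θ ^ m) := by
    intro m
    calc T m ≤ ((m : ℝ) + 1) * Vmax * r P b m a := hit_sum_le hP V hV hVle a m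
      _ ≤ ((m : ℝ) + 1) * Vmax * (C * θ ^ m) := by
          refine mul_le_mul_of_nonneg_left (hgeom m a) (by positivity)
  have hBsum : Summable (fun m : ℕ => ((m : ℝ) + 1) * Vmax * (C * θ ^ m)) := by
    have hnorm : ‖θ‖ < 1 := by rwa [Real.norm_eq_abs, abs_of_nonneg hθ0]
    have base := summable_pow_mul_geometric_of_norm_lt_one 1 hnorm (R := ℝ)
    have geo := summable_geometric_of_lt_one hθ0 hθ1
    exact ((base.add geo).mul_left (Vmax * C)).congr fun m => by
      push_cast; ring
  have hTsum : Summable T := Summable.of_nonneg_of_le hTnn hTle hBsum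
  refine ⟨?_, hTsum⟩
  set F : (Σ m : ℕ, Fin (m + 1 + 1) → Z) → ℝ := fun p =>
    if p.2 0 = a ∧ p.2 (Fin.last (p.1 + 1)) = b ∧
        (∀ i : Fin (p.1 + 1 + 1), i < Fin.last (p.1 + 1) → p.2 i ≠ b)
    then pathWeight V p.2 * pathProb P p.2 else 0 with hF
  have hF0 : ∀ p, 0 ≤ F p := by
    intro p
    rw [hF]
    dsimp only
    split
    · refine mul_nonneg ?_ ?_
      · exact Finset.sum_nonneg fun i _ => (hV _ _).le
      · exact Finset.prod_nonneg fun i _ => hP.1 _ _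
    · exact le_refl 0
  have hFfiber : ∀ m : ℕ, ∑' x : Fin (m + 1 + 1) → Z, F ⟨m, x⟩ = T m := by
    intro m
    rw [tsum_fintype]
    simp only [hT, hF]
    rw [Finset.sum_filter]
  have hFsum : Summable F := by
    rw [summable_sigma_of_nonneg hF0]
    refine ⟨fun m => Summable.of_finite, ?_⟩
    exact hTsum.congr fun m => (hFfiber m).symm
  have hsub := hFsum.subtype {p : Σ m : ℕ, Fin (m + 1 + 1) → Z |
    p.2 0 = a ∧ p.2 (Fin.last (p.1 + 1)) = b ∧
      ∀ i : Fin (p.1 + 1 + 1), i < Fin.last (p.1 + 1) → p.2 i ≠ b}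
  exact hsub.congr fun q => by
    show F q.val = _
    rw [hF]
    exact if_pos q.2
end

section
/- Let Z be a nonempty finite type and P : Z → Z → ℝ a row-stochastic matrix that is irreducible. Then for all a, b ∈ Z with a ≠ b, the total probability of eventually hitting b from a is 1: ∑_{m=1}^∞ ∑_{x ∈ S^m_{⟨a,b⟩}} Prob(x) = 1, where S^m_{⟨a,b⟩} is the set of paths x of length m with x₀ = a, x_m = b, and x_i ≠ b for all i < m. -/
/-!
Let `R` be `P` with the row of `b` replaced by zero. Expanding `(R ^ m) a b` as a sum over paths,
exactly the paths that do not visit `b` before time `m` survive, so the `m`-th summand equals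
`(R ^ m) a b`. The survival vector `s k = R ^ k *ᵥ 1` satisfies `s k - s (k + 1) = (R ^ k) · b`,
so the partial sums telescope to `s 1 a - s (N + 1) a = 1 - s (N + 1) a`. Since every state
reaches `b` with positive probability, there is a horizon `N` with `s N < ρ < 1` in every
coordinate; then `s (k + N) ≤ ρ • s k`, and `s` decays geometrically to `0`.
-/

open scoped Classical

open Finset

namespace Matrix

section UpdateRow

variable {n R : Type*} [DecidableEq n] [Zero R] [Preorder R] {M : Matrix n n R}

theorem updateRow_zero_apply_nonneg (hM : ∀ i j, 0 ≤ M i j) (b i j : n) :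
    0 ≤ M.updateRow b 0 i j := by
  rw [updateRow_apply]
  split_ifs
  exacts [le_rfl, hM i j]

theorem updateRow_zero_apply_le (hM : ∀ i j, 0 ≤ M i j) (b i j : n) :
    M.updateRow b 0 i j ≤ M i j := by
  rw [updateRow_apply]
  split_ifs
  exacts [hM i j, le_rfl]

end UpdateRow

variable {n : Type*} [Fintype n]

theorem mulVec_mono_of_nonneg {R : Type*} [CommSemiring R] [PartialOrder R] [IsOrderedRing R]
    {A : Matrix n n R} (hA : ∀ i j, 0 ≤ A i j) {v w : n → R} (hvw : v ≤ w) :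
    A *ᵥ v ≤ A *ᵥ w :=
  fun i => dotProduct_le_dotProduct_of_nonneg_left hvw (hA i)

variable [DecidableEq n]

theorem pow_apply_le_pow_apply_of_le {R : Type*} [CommSemiring R] [PartialOrder R]
    [IsOrderedRing R] {A B : Matrix n n R} (hA : ∀ i j, 0 ≤ A i j)
    (hAB : ∀ i j, A i j ≤ B i j) (k : ℕ) (i j : n) : (A ^ k) i j ≤ (B ^ k) i j := by
  induction k generalizing j with
  | zero => rfl
  | succ k ih =>
    rw [pow_succ, pow_succ, mul_apply, mul_apply]
    exact sum_le_sum fun l _ => mul_le_mul (ih l) (hAB l j) (hA l j)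
      ((pow_apply_nonneg hA k i l).trans (ih l))

section Paths

variable {R : Type*} [CommSemiring R]

theorem pow_apply_eq_sum_paths (M : Matrix n n R) (k : ℕ) (i j : n) :
    (M ^ k) i j = ∑ x ∈ univ.filter (fun x : Fin (k + 1) → n => x 0 = i ∧ x (Fin.last k) = j),
      ∏ l : Fin k, M (x l.castSucc) (x l.succ) := by
  induction k generalizing i with
  | zero =>
    rw [pow_zero, one_apply, sum_filter, ← (Equiv.funUnique (Fin 1) n).symm.sum_comp]
    simp [Fin.last, ite_and]
  | succ k ih =>
    rw [sum_filter, ← (Fin.consEquiv fun _ => n).sum_comp, Fintype.sum_prod_type]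
    simp [Fin.consEquiv, Fin.prod_univ_succ, pow_succ', mul_apply, ih, mul_sum, sum_filter]
    rw [sum_comm]
    simp [ite_and]

theorem updateRow_zero_pow_apply_eq_sum_first_passage_paths (M : Matrix n n R) (k : ℕ)
    (a b : n) :
    ((M.updateRow b 0) ^ k) a b = ∑ x ∈ univ.filter (fun x : Fin (k + 1) → n =>
        x 0 = a ∧ x (Fin.last k) = b ∧ ∀ i, i < Fin.last k → x i ≠ b),
      ∏ l : Fin k, M (x l.castSucc) (x l.succ) := by
  rw [pow_apply_eq_sum_paths]
  symm
  refine sum_subset_zero_on_sdiff (fun x hx => ?_) (fun x hx => ?_) (fun x hx => ?_)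
  · simp only [mem_filter] at hx ⊢
    exact ⟨hx.1, hx.2.1, hx.2.2.1⟩
  · simp only [mem_sdiff, mem_filter, not_and, not_forall, not_not] at hx
    obtain ⟨i, hi, hib⟩ := hx.2 hx.1.1 hx.1.2.1 hx.1.2.2
    obtain ⟨l, rfl⟩ := Fin.exists_castSucc_eq.2 hi.ne
    exact prod_eq_zero (mem_univ l) (by simp [hib])
  · simp only [mem_filter] at hx
    refine prod_congr rfl fun l _ => ?_
    simp [updateRow_apply, hx.2.2.2 _ (Fin.castSucc_lt_last l)]

end Paths

section Survival

variable {R : Type*} [Ring R] {M : Matrix n n R}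

theorem updateRow_zero_mulVec_one (hM : M *ᵥ 1 = 1) (b : n) :
    M.updateRow b 0 *ᵥ 1 = 1 - Pi.single b 1 := by
  ext c
  rcases eq_or_ne c b with rfl | hc
  · simp [mulVec]
  · simpa [mulVec, hc] using congrFun hM c

theorem updateRow_zero_pow_apply_eq_sub (hM : M *ᵥ 1 = 1) (b : n) (k : ℕ) (c : n) :
    ((M.updateRow b 0) ^ k) c b =
      ((M.updateRow b 0) ^ k *ᵥ 1) c - ((M.updateRow b 0) ^ (k + 1) *ᵥ 1) c := by
  rw [pow_succ, ← mulVec_mulVec, updateRow_zero_mulVec_one hM, mulVec_sub, mulVec_single_one]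
  simp

end Survival

open Filter Topology

section Substochastic

variable {A : Matrix n n ℝ}

theorem pow_mulVec_one_antitone (hA : ∀ i j, 0 ≤ A i j) (hA1 : A *ᵥ 1 ≤ 1) :
    Antitone fun k => A ^ k *ᵥ (1 : n → ℝ) :=
  antitone_nat_of_succ_le fun k => by
    rw [pow_succ, ← mulVec_mulVec]
    exact mulVec_mono_of_nonneg (pow_apply_nonneg hA k) hA1

theorem tendsto_pow_mulVec_one_nhds_zero (hA : ∀ i j, 0 ≤ A i j) (hA1 : A *ᵥ 1 ≤ 1)
    (hesc : ∀ i, ∃ k, (A ^ k *ᵥ 1) i < 1) :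
    Tendsto (fun k => A ^ k *ᵥ (1 : n → ℝ)) atTop (𝓝 0) := by
  set s : ℕ → n → ℝ := fun k => A ^ k *ᵥ 1 with hs
  have hanti : Antitone s := pow_mulVec_one_antitone hA hA1
  have hnonneg : ∀ k, 0 ≤ s k := fun k i =>
    dotProduct_nonneg_of_nonneg (pow_apply_nonneg hA k i) zero_le_one
  choose K hK using hesc
  set N := univ.sup K + 1
  have hN : ∀ i, s N i < 1 := fun i =>
    (hanti ((le_sup (mem_univ i)).trans (Nat.le_succ _)) i).trans_lt (hK i)
  obtain ⟨ρ, hρN, hρ1, hρ0⟩ : ∃ ρ : ℝ, (∀ i, s N i < ρ) ∧ ρ < 1 ∧ 0 < ρ := by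
    have hnear : ∀ᶠ ρ in 𝓝[<] (1 : ℝ), (∀ i, s N i < ρ) ∧ ρ < 1 ∧ 0 < ρ :=
      (eventually_all.2 fun i => nhdsWithin_le_nhds (eventually_gt_nhds (hN i))).and <|
        eventually_mem_nhdsWithin.and <| nhdsWithin_le_nhds (eventually_gt_nhds one_pos)
    exact hnear.exists
  have hcontr : ∀ k, s (k + N) ≤ ρ • s k := fun k =>
    calc s (k + N) = A ^ k *ᵥ s N := by simp only [hs, pow_add, mulVec_mulVec]
      _ ≤ A ^ k *ᵥ (ρ • 1) :=
        mulVec_mono_of_nonneg (pow_apply_nonneg hA k) fun i => by simpa using (hρN i).le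
      _ = ρ • s k := mulVec_smul _ _ _
  have hgeom : ∀ j i, s (j * N) i ≤ ρ ^ j := by
    intro j i
    induction j with
    | zero => simp [hs]
    | succ j ih =>
      calc s ((j + 1) * N) i ≤ ρ * s (j * N) i := by rw [add_one_mul]; exact hcontr _ i
        _ ≤ ρ * ρ ^ j := by gcongr
        _ = ρ ^ (j + 1) := (pow_succ' ρ j).symm
  refine tendsto_pi_nhds.2 fun i => squeeze_zero (fun k => hnonneg k i)
    (fun k => (hanti (Nat.div_mul_le_self k N) i).trans (hgeom (k / N) i)) ?_
  exact (tendsto_pow_atTop_nhds_zero_of_lt_one hρ0.le hρ1).comp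
    (Nat.tendsto_div_const_atTop (Nat.succ_ne_zero _))

end Substochastic

section FirstPassage

variable {M : Matrix n n ℝ} {b : n}

theorem updateRow_zero_pow_succ_mulVec_one_lt_one (hM : M ∈ rowStochastic ℝ n) {k : ℕ}
    {c : n} (hpos : 0 < (M ^ k) c b) : ((M.updateRow b 0) ^ (k + 1) *ᵥ 1) c < 1 := by
  have hv : 0 ≤ (1 : n → ℝ) - Pi.single b 1 := fun d => by
    rcases eq_or_ne d b with rfl | hd <;> simp [*]
  calc ((M.updateRow b 0) ^ (k + 1) *ᵥ 1) c
        = ((M.updateRow b 0) ^ k *ᵥ (1 - Pi.single b 1)) c := by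
        rw [pow_succ, ← mulVec_mulVec, updateRow_zero_mulVec_one hM.2]
    _ ≤ (M ^ k *ᵥ (1 - Pi.single b 1)) c :=
        dotProduct_le_dotProduct_of_nonneg_right (fun d => pow_apply_le_pow_apply_of_le
          (updateRow_zero_apply_nonneg hM.1 b) (updateRow_zero_apply_le hM.1 b) k c d) hv
    _ = 1 - (M ^ k) c b := by
        rw [mulVec_sub, mulVec_single_one, (pow_mem hM k).2]
        simp
    _ < 1 := sub_lt_self 1 hpos

theorem hasSum_updateRow_zero_pow_succ_apply (hM : M ∈ rowStochastic ℝ n)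
    (hreach : ∀ c, ∃ k, 0 < (M ^ k) c b) {a : n} (hab : a ≠ b) :
    HasSum (fun k => ((M.updateRow b 0) ^ (k + 1)) a b) 1 := by
  have hRnn : ∀ i j, 0 ≤ M.updateRow b 0 i j := updateRow_zero_apply_nonneg hM.1 b
  have hR1 : M.updateRow b 0 *ᵥ 1 = 1 - Pi.single b 1 := updateRow_zero_mulVec_one hM.2 b
  have hsurvival : Tendsto (fun k => (M.updateRow b 0) ^ k *ᵥ (1 : n → ℝ)) atTop (𝓝 0) := by
    refine tendsto_pow_mulVec_one_nhds_zero hRnn ?_ fun c => ?_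
    · rw [hR1]
      exact sub_le_self _ (Pi.single_nonneg.2 zero_le_one)
    · obtain ⟨k, hk⟩ := hreach c
      exact ⟨k + 1, updateRow_zero_pow_succ_mulVec_one_lt_one hM hk⟩
  have hpartial : ∀ N, ∑ k ∈ range N, ((M.updateRow b 0) ^ (k + 1)) a b =
      1 - ((M.updateRow b 0) ^ (N + 1) *ᵥ 1) a := by
    intro N
    simp_rw [updateRow_zero_pow_apply_eq_sub hM.2 b, sum_range_sub']
    simp [hR1, hab]
  rw [hasSum_iff_tendsto_nat_of_nonneg (fun k => pow_apply_nonneg hRnn _ a b)]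
  simp_rw [hpartial]
  simpa using tendsto_const_nhds.sub
    (((continuous_apply a).tendsto 0).comp (hsurvival.comp (tendsto_add_atTop_nat 1)))

end FirstPassage

end Matrix

theorem stmt_13_general {Z : Type*} [Fintype Z] [DecidableEq Z] (P : Z → Z → ℝ)
    (hP : RowStochastic P) (hirr : IsIrreducibleChain P) (a b : Z) (hab : a ≠ b) :
    ∑' m : ℕ, ∑ x ∈ Finset.univ.filter (fun x : Fin (m + 1 + 1) → Z =>
        x 0 = a ∧ x (Fin.last (m + 1)) = b ∧
        ∀ i : Fin (m + 1 + 1), i < Fin.last (m + 1) → x i ≠ b),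
      pathProb P x = 1 := by
  have hM : Matrix.of P ∈ Matrix.rowStochastic ℝ Z := Matrix.mem_rowStochastic_iff_sum.2 hP
  have hreach : ∀ c, ∃ k, 0 < (Matrix.of P ^ k) c b := fun c => (hirr c b).imp fun _ => And.right
  rw [← (Matrix.hasSum_updateRow_zero_pow_succ_apply hM hreach hab).tsum_eq]
  exact tsum_congr fun m =>
    (Matrix.updateRow_zero_pow_apply_eq_sum_first_passage_paths (.of P) (m + 1) a b).symm

theorem stmt_13 {Z : Type*} [Fintype Z] [Nonempty Z] [DecidableEq Z] (P : Z → Z → ℝ)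
    (hP : RowStochastic P) (hirr : IsIrreducibleChain P) (a b : Z) (hab : a ≠ b) :
    ∑' m : ℕ, ∑ x ∈ Finset.univ.filter (fun x : Fin (m + 1 + 1) → Z =>
        x 0 = a ∧ x (Fin.last (m + 1)) = b ∧
        ∀ i : Fin (m + 1 + 1), i < Fin.last (m + 1) → x i ≠ b),
      pathProb P x = 1 :=
  stmt_13_general P hP hirr a b hab
end

section
/- Let p_{ab}, p_{ac}, p_{ba}, p_{bc}, p_{ca}, p_{cb} be nonnegative reals with p_{ab} + p_{ac} = 1, p_{ba} + p_{bc} = 1, p_{ca} + p_{cb} = 1, p_{ab}·p_{ba} < 1 and p_{ac}·p_{ca} < 1, and let v_{ab}, v_{ac}, v_{ba}, v_{bc}, v_{ca}, v_{cb} be nonnegative reals. Then (v_{ac}p_{ac} + p_{ab}v_{ab} + p_{ab}(v_{bc}p_{bc} + p_{ba}v_{ba})) / (1 − p_{ab}p_{ba}) ≤ (v_{ab}p_{ab} + p_{ac}v_{ac} + p_{ac}(v_{cb}p_{cb} + p_{ca}v_{ca})) / (1 − p_{ac}p_{ca}) + (v_{bc}p_{bc} + p_{ba}v_{ba} + p_{ba}(v_{ac}p_{ac}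 + p_{ab}v_{ab})) / (1 − p_{ba}p_{ab}). -/
/-!
Write `hitTime x y p q = (x + p * y) / (1 - p * q)` for the mean cost of reaching the third
state `c` from `a`, when `a` moves to `b` with probability `p` at mean step cost `x`, and `b`
returns to `a` with probability `q` at mean step cost `y`. Subtracting the `b`-to-`c` time from
the `a`-to-`c` time leaves `((1 - q) x - (1 - p) y) / (1 - p q)`, which is at most the single
step cost `x`; and `x` is at most the `a`-to-`b` time, which also starts with a step costing `x`.
-/

noncomputable def hitTime (x y p q : ℝ) : ℝ := (x + p * y) / (1 - p * q)

theorem hitTime_sub_hitTime_swap {x y p q : ℝ} :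
    hitTime x y p q - hitTime y x q p = ((1 - q) * x - (1 - p) * y) / (1 - p * q) := by
  rw [hitTime, hitTime, mul_comm q p, div_sub_div_same]
  ring_nf

theorem hitTime_sub_hitTime_swap_le {x y p q : ℝ} (hx : 0 ≤ x) (hy : 0 ≤ y) (hp : p ≤ 1)
    (hq : 0 ≤ q) (hpq : p * q < 1) : hitTime x y p q - hitTime y x q p ≤ x := by
  have hD : 0 < 1 - p * q := by linarith
  rw [hitTime_sub_hitTime_swap, div_le_iff₀ hD]
  have hqD : 1 - q ≤ 1 - p * q := by nlinarith
  nlinarith [mul_nonneg (sub_nonneg.mpr hp) hy, mul_le_mul_of_nonneg_left hqD hx]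

theorem le_hitTime {x y p q : ℝ} (hx : 0 ≤ x) (hy : 0 ≤ y) (hp : 0 ≤ p) (hq : 0 ≤ q)
    (hpq : p * q < 1) : x ≤ hitTime x y p q := by
  rw [hitTime, le_div_iff₀ (by linarith)]
  nlinarith [mul_nonneg hp hy, mul_nonneg hx (mul_nonneg hp hq)]

theorem hitTime_le_hitTime_add_hitTime {x y z p q p' r : ℝ} (hx : 0 ≤ x) (hy : 0 ≤ y)
    (hz : 0 ≤ z) (hp : p ≤ 1) (hq : 0 ≤ q) (hpq : p * q < 1) (hp' : 0 ≤ p') (hr : 0 ≤ r)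
    (hp'r : p' * r < 1) : hitTime x y p q ≤ hitTime x z p' r + hitTime y x q p := by
  linarith [hitTime_sub_hitTime_swap_le hx hy hp hq hpq, le_hitTime hx hz hp' hr hp'r]

theorem stmt_17_general
    (pab pac pba pbc pca pcb : ℝ)
    (hpab : 0 ≤ pab) (hpac : 0 ≤ pac) (hpba : 0 ≤ pba)
    (hpbc : 0 ≤ pbc) (hpca : 0 ≤ pca) (hpcb : 0 ≤ pcb)
    (ha : pab + pac = 1)
    (hdab : pab * pba < 1) (hdac : pac * pca < 1)
    (vab vac vba vbc vca vcb : ℝ)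
    (hvab : 0 ≤ vab) (hvac : 0 ≤ vac) (hvba : 0 ≤ vba)
    (hvbc : 0 ≤ vbc) (hvca : 0 ≤ vca) (hvcb : 0 ≤ vcb) :
    (vac * pac + pab * vab + pab * (vbc * pbc + pba * vba)) / (1 - pab * pba) ≤
      (vab * pab + pac * vac + pac * (vcb * pcb + pca * vca)) / (1 - pac * pca) +
      (vbc * pbc + pba * vba + pba * (vac * pac + pab * vab)) / (1 - pba * pab) := by
  rw [show vab * pab + pac * vac = vac * pac + pab * vab by ring]
  exact hitTime_le_hitTime_add_hitTime (by positivity) (by positivity) (by positivity)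
    (by linarith) hpba hdab hpac hpca hdac

theorem stmt_17
    (pab pac pba pbc pca pcb : ℝ)
    (hpab : 0 ≤ pab) (hpac : 0 ≤ pac) (hpba : 0 ≤ pba)
    (hpbc : 0 ≤ pbc) (hpca : 0 ≤ pca) (hpcb : 0 ≤ pcb)
    (ha : pab + pac = 1) (hb : pba + pbc = 1) (hc : pca + pcb = 1)
    (hdab : pab * pba < 1) (hdac : pac * pca < 1)
    (vab vac vba vbc vca vcb : ℝ)
    (hvab : 0 ≤ vab) (hvac : 0 ≤ vac) (hvba : 0 ≤ vba)
    (hvbc : 0 ≤ vbc) (hvca : 0 ≤ vca) (hvcb : 0 ≤ vcb) :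
    (vac * pac + pab * vab + pab * (vbc * pbc + pba * vba)) / (1 - pab * pba) ≤
      (vab * pab + pac * vac + pac * (vcb * pcb + pca * vca)) / (1 - pac * pca) +
      (vbc * pbc + pba * vba + pba * (vac * pac + pab * vab)) / (1 - pba * pab) :=
  stmt_17_general pab pac pba pbc pca pcb hpab hpac hpba hpbc hpca hpcb ha hdab hdac vab vac vba vbc
    vca vcb hvab hvac hvba hvbc hvca hvcb
end
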